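/- Let κ be an infinite cardinal, μ a cardinal with κ = μ⁺, and λ ≥ κ. If I is a normal, fine, κ-complete ideal on 𝒫_κ(λ), then I is not λ-saturated: there exists a family of λ many I-positive subsets of 𝒫_κ(λ) whose pairwise intersections all lie in I. -/

import Mathlib

/-! Fix injections `g z : z ↪ μ` for `z ∈ 𝒫_κ(λ)` (possible as `κ = μ⁺`) and form the Ulam
matrix `A α ξ = {z | α ∈ z ∧ g z α = ξ}`. Each row `ξ` is pairwise disjoint in `α`, and by
fineness and `κ`-completeness, for every positive `S` and every `α` some `A α ξ ∩ S` is positive.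
So the positive entries of the rows restricted to `S` cover `λ`, and (`μ < λ`) some row restricted
to `S` has more than `ν` positive entries, for any `ν < λ`. If some row of the whole matrix has `λ`
positive entries we are done. Otherwise take `μ` disjoint positive sets `S ξ` from one row, and
below each `S ξ` a row with more positive entries than row `ξ` of the matrix has; altogether these
are `Σ_ξ |{α | A α ξ positive}| = λ` pairwise disjoint positive sets. -/

open Cardinal Set

universe u

/-- `I` is a (nonprincipal, proper) ideal on the set `Z` of subsets of `X`. -/
def IsSetIdeal {X : Type u} (Z : Set (Set X)) (I : Set (Set (Set X))) : Prop :=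
  (∀ A ∈ I, A ⊆ Z) ∧
  (∀ A ∈ I, ∀ B : Set (Set X), B ⊆ A → B ∈ I) ∧
  (∀ A ∈ I, ∀ B ∈ I, A ∪ B ∈ I) ∧
  (∀ z ∈ Z, ({z} : Set (Set X)) ∈ I) ∧
  Z ∉ I

/-- `I` is fine. -/
def IsFineSetIdeal {X : Type u} (Z : Set (Set X)) (I : Set (Set (Set X))) : Prop :=
  ∀ x : X, {z | z ∈ Z ∧ x ∉ z} ∈ I

/-- `I` is normal. -/
def IsNormalSetIdeal {X : Type u} (Z : Set (Set X)) (I : Set (Set (Set X))) : Prop :=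
  ∀ A : X → Set (Set X), (∀ x, A x ∈ I) →
    {z | z ∈ Z ∧ ∃ x, x ∈ z ∧ z ∈ A x} ∈ I

/-- `I` is `κ`-complete. -/
def IsCompleteSetIdeal {X : Type u} (κ : Cardinal.{u}) (I : Set (Set (Set X))) : Prop :=
  ∀ 𝒜 : Set (Set (Set X)), #𝒜 < κ → 𝒜 ⊆ I → ⋃₀ 𝒜 ∈ I

open Function

section SetIdeal

variable {X : Type u} {Z : Set (Set X)} {I : Set (Set (Set X))}

theorem IsSetIdeal.mem_of_subset (hI : IsSetIdeal Z I) {A B : Set (Set X)} (hA : A ∈ I)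
    (hBA : B ⊆ A) : B ∈ I :=
  hI.2.1 A hA B hBA

theorem IsSetIdeal.union_mem (hI : IsSetIdeal Z I) {A B : Set (Set X)} (hA : A ∈ I)
    (hB : B ∈ I) : A ∪ B ∈ I :=
  hI.2.2.1 A hA B hB

theorem IsSetIdeal.empty_mem (hI : IsSetIdeal Z I) {z : Set X} (hz : z ∈ Z) : ∅ ∈ I :=
  hI.mem_of_subset (hI.2.2.2.1 z hz) (empty_subset _)

theorem IsSetIdeal.carrier_notMem (hI : IsSetIdeal Z I) : Z ∉ I :=
  hI.2.2.2.2

theorem IsCompleteSetIdeal.iUnion_mem {κ : Cardinal.{u}} {ι : Type u}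
    (hI : IsCompleteSetIdeal κ I) (hι : #ι < κ) {A : ι → Set (Set X)} (hA : ∀ i, A i ∈ I) :
    ⋃ i, A i ∈ I := by
  rw [← sUnion_range]
  exact hI _ (mk_range_le.trans_lt hι) (range_subset_iff.mpr hA)

def IsDisjointPositiveFamily {ι : Type*} (Z : Set (Set X)) (I : Set (Set (Set X)))
    (P : ι → Set (Set X)) : Prop :=
  (∀ i, P i ⊆ Z) ∧ (∀ i, P i ∉ I) ∧ Pairwise (Disjoint on P)

namespace IsDisjointPositiveFamily

variable {ι : Type*} {P : ι → Set (Set X)}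

theorem comp (hP : IsDisjointPositiveFamily Z I P) {ι' : Type*} {f : ι' → ι} (hf : Injective f) :
    IsDisjointPositiveFamily Z I (P ∘ f) :=
  ⟨fun _ => hP.1 _, fun _ => hP.2.1 _, hP.2.2.comp_of_injective hf⟩

theorem sigma {S : ι → Set (Set X)} (hS : IsDisjointPositiveFamily Z I S) {β : ι → Type*}
    {Q : ∀ i, β i → Set (Set X)} (hQ : ∀ i, IsDisjointPositiveFamily (S i) I (Q i)) :
    IsDisjointPositiveFamily Z I (fun p : Σ i, β i => Q p.1 p.2) := by
  refine ⟨fun p => ((hQ p.1).1 p.2).trans (hS.1 p.1), fun p => (hQ p.1).2.1 p.2, ?_⟩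
  rintro ⟨i, a⟩ ⟨j, b⟩ hne
  by_cases hij : i = j
  · subst hij
    exact (hQ i).2.2 fun hab => hne (congrArg _ hab)
  · exact (hS.2.2 hij).mono ((hQ i).1 a) ((hQ j).1 b)

theorem exists_antichain {ι : Type u} {P : ι → Set (Set X)}
    (hP : IsDisjointPositiveFamily Z I P) (hempty : ∅ ∈ I) :
    ∃ 𝒜 : Set (Set (Set X)), #𝒜 = #ι ∧ (∀ A ∈ 𝒜, A ⊆ Z ∧ A ∉ I) ∧
      ∀ A ∈ 𝒜, ∀ B ∈ 𝒜, A ≠ B → A ∩ B ∈ I := by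
  have hinj : Injective P := by
    intro i j hij
    by_contra hne
    have hdisj : Disjoint (P i) (P j) := hP.2.2 hne
    rw [hij, disjoint_self, bot_eq_empty] at hdisj
    exact hP.2.1 j (hdisj ▸ hempty)
  refine ⟨range P, mk_range_eq P hinj, ?_, ?_⟩
  · rintro _ ⟨i, rfl⟩
    exact ⟨hP.1 i, hP.2.1 i⟩
  · rintro _ ⟨i, rfl⟩ _ ⟨j, rfl⟩ hne
    rw [(hP.2.2 (ne_of_apply_ne P hne)).inter_eq]
    exact hempty

end IsDisjointPositiveFamily

end SetIdeal

theorem Cardinal.sum_mk_eq_of_iUnion_eq_univ {α ι : Type u} {T : ι → Set α}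
    (hT : ⋃ i, T i = Set.univ) (hα : ℵ₀ ≤ #α) (hι : #ι ≤ #α) : (sum fun i => #(T i)) = #α := by
  apply le_antisymm
  · calc (sum fun i => #(T i)) ≤ #ι * ⨆ i, #(T i) := sum_le_mk_mul_iSup _
      _ ≤ #α * #α := mul_le_mul' hι (ciSup_le' fun i => mk_set_le _)
      _ = #α := mul_eq_self hα
  · calc #α = #(⋃ i, T i) := by rw [hT, mk_univ]
      _ ≤ _ := mk_iUnion_le_sum_mk

section UlamMatrix

variable {X M : Type u} {Z : Set (Set X)} {I : Set (Set (Set X))}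

def ulamMatrix (g : ∀ z ∈ Z, z ↪ M) (α : X) (ξ : M) : Set (Set X) :=
  {z | ∃ (hz : z ∈ Z) (hα : α ∈ z), g z hz ⟨α, hα⟩ = ξ}

variable {g : ∀ z ∈ Z, z ↪ M}

theorem eq_of_mem_ulamMatrix {α β : X} {ξ : M} {z : Set X} (hα : z ∈ ulamMatrix g α ξ)
    (hβ : z ∈ ulamMatrix g β ξ) : α = β := by
  obtain ⟨hz, hαz, rfl⟩ := hα
  obtain ⟨_, hβz, h⟩ := hβ
  exact congrArg Subtype.val ((g z hz).injective h.symm)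

theorem iUnion_ulamMatrix (α : X) : ⋃ ξ, ulamMatrix g α ξ = {z ∈ Z | α ∈ z} := by
  ext z
  simp only [ulamMatrix, mem_iUnion]
  constructor
  · rintro ⟨_, hz, hαz, _⟩
    exact ⟨hz, hαz⟩
  · rintro ⟨hz, hαz⟩
    exact ⟨_, hz, hαz, rfl⟩

theorem exists_ulamMatrix_inter_notMem {κ : Cardinal.{u}} (hI : IsSetIdeal Z I)
    (hfine : IsFineSetIdeal Z I) (hcomplete : IsCompleteSetIdeal κ I) (hM : #M < κ)
    {S : Set (Set X)} (hSZ : S ⊆ Z) (hS : S ∉ I) (α : X) :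
    ∃ ξ, ulamMatrix g α ξ ∩ S ∉ I := by
  by_contra! h
  refine hS (hI.mem_of_subset (hI.union_mem (hfine α) (hcomplete.iUnion_mem hM h)) ?_)
  intro z hz
  by_cases hαz : α ∈ z
  · right
    rw [← iUnion_inter, iUnion_ulamMatrix]
    exact ⟨⟨hSZ hz, hαz⟩, hz⟩
  · exact Or.inl ⟨hSZ hz, hαz⟩

variable (I g)

def ulamRowSupport (S : Set (Set X)) (ξ : M) : Set X :=
  {α | ulamMatrix g α ξ ∩ S ∉ I}

def ulamRow (S : Set (Set X)) (ξ : M) (α : ulamRowSupport I g S ξ) : Set (Set X) :=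
  ulamMatrix g α ξ ∩ S

theorem isDisjointPositiveFamily_ulamRow (S : Set (Set X)) (ξ : M) :
    IsDisjointPositiveFamily S I (ulamRow I g S ξ) :=
  ⟨fun _ => inter_subset_right, fun α => α.2, fun _ _ hne =>
    disjoint_left.mpr fun _ hα hβ => hne (Subtype.ext (eq_of_mem_ulamMatrix hα.1 hβ.1))⟩

variable {I g}

theorem iUnion_ulamRowSupport {κ : Cardinal.{u}} (hI : IsSetIdeal Z I)
    (hfine : IsFineSetIdeal Z I) (hcomplete : IsCompleteSetIdeal κ I) (hM : #M < κ)
    {S : Set (Set X)} (hSZ : S ⊆ Z) (hS : S ∉ I) : ⋃ ξ, ulamRowSupport I g S ξ = Set.univ :=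
  eq_univ_of_forall fun α =>
    mem_iUnion.mpr (exists_ulamMatrix_inter_notMem hI hfine hcomplete hM hSZ hS α)

theorem exists_lt_mk_ulamRowSupport {κ : Cardinal.{u}} (hI : IsSetIdeal Z I)
    (hfine : IsFineSetIdeal Z I) (hcomplete : IsCompleteSetIdeal κ I) (hM : #M < κ)
    (hX : ℵ₀ ≤ #X) (hMX : #M < #X) {S : Set (Set X)} (hSZ : S ⊆ Z) (hS : S ∉ I)
    {ν : Cardinal.{u}} (hν : ν < #X) : ∃ ξ, ν < #(ulamRowSupport I g S ξ) := by
  by_contra! h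
  have hlt : #X < #X :=
    calc #X = #(⋃ ξ, ulamRowSupport I g S ξ) := by
          rw [iUnion_ulamRowSupport hI hfine hcomplete hM hSZ hS, mk_univ]
      _ ≤ #M * ⨆ ξ, #(ulamRowSupport I g S ξ) := mk_iUnion_le _
      _ ≤ #M * ν := by gcongr; exact ciSup_le' h
      _ < #X := mul_lt_of_lt hX hMX hν
  exact hlt.false

theorem exists_isDisjointPositiveFamily_sigma_of_mk_lt {κ : Cardinal.{u}} (hI : IsSetIdeal Z I)
    (hfine : IsFineSetIdeal Z I) (hcomplete : IsCompleteSetIdeal κ I) (hM : #M < κ)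
    (hX : ℵ₀ ≤ #X) (hMX : #M < #X) (hsmall : ∀ ξ, #(ulamRowSupport I g Z ξ) < #X) :
    ∃ P : (Σ ξ, ulamRowSupport I g Z ξ) → Set (Set X), IsDisjointPositiveFamily Z I P := by
  obtain ⟨ξ₀, hξ₀⟩ := exists_lt_mk_ulamRowSupport hI hfine hcomplete hM hX hMX subset_rfl
    hI.carrier_notMem hMX
  obtain ⟨e⟩ := (le_def _ _).mp hξ₀.le
  have hS := (isDisjointPositiveFamily_ulamRow I g Z ξ₀).comp e.injective
  have hlarger : ∀ ξ, ∃ η, #(ulamRowSupport I g Z ξ) <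
      #(ulamRowSupport I g (ulamRow I g Z ξ₀ (e ξ)) η) := fun ξ =>
    exists_lt_mk_ulamRowSupport hI hfine hcomplete hM hX hMX (hS.1 ξ) (hS.2.1 ξ) (hsmall ξ)
  choose η hη using hlarger
  have w : ∀ ξ, ulamRowSupport I g Z ξ ↪ ulamRowSupport I g (ulamRow I g Z ξ₀ (e ξ)) (η ξ) :=
    fun ξ => ((le_def _ _).mp (hη ξ).le).some
  exact ⟨_, hS.sigma fun ξ => (isDisjointPositiveFamily_ulamRow I g _ (η ξ)).comp (w ξ).injective⟩

end UlamMatrix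

theorem exists_isDisjointPositiveFamily_mk_eq {X M : Type u} {Z : Set (Set X)}
    {I : Set (Set (Set X))} {κ : Cardinal.{u}} (hI : IsSetIdeal Z I)
    (hfine : IsFineSetIdeal Z I) (hcomplete : IsCompleteSetIdeal κ I) (hM : #M < κ)
    (hZ : ∀ z ∈ Z, #z ≤ #M) (hX : ℵ₀ ≤ #X) (hMX : #M < #X) :
    ∃ (ι : Type u) (P : ι → Set (Set X)), #ι = #X ∧ IsDisjointPositiveFamily Z I P := by
  let g : ∀ z ∈ Z, z ↪ M := fun z hz => ((le_def _ _).mp (hZ z hz)).some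
  by_cases hlarge : ∃ ξ, #X ≤ #(ulamRowSupport I g Z ξ)
  · obtain ⟨ξ, hξ⟩ := hlarge
    exact ⟨_, _, (mk_set_le _).antisymm hξ, isDisjointPositiveFamily_ulamRow I g Z ξ⟩
  · simp only [not_exists, not_le] at hlarge
    obtain ⟨P, hP⟩ :=
      exists_isDisjointPositiveFamily_sigma_of_mk_lt hI hfine hcomplete hM hX hMX hlarge
    refine ⟨_, P, ?_, hP⟩
    rw [mk_sigma]
    exact sum_mk_eq_of_iUnion_eq_univ
      (iUnion_ulamRowSupport hI hfine hcomplete hM subset_rfl hI.carrier_notMem) hX hMX.le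

theorem not_lambda_saturated_general (μ κ lam : Cardinal.{u})
    (hκinf : ℵ₀ ≤ κ) (hsucc : κ = Order.succ μ) (hle : κ ≤ lam)
    (I : Set (Set (Set lam.ord.ToType)))
    (hideal : IsSetIdeal {z : Set lam.ord.ToType | #z < κ} I)
    (hfine : IsFineSetIdeal {z : Set lam.ord.ToType | #z < κ} I)
    (hcomplete : IsCompleteSetIdeal κ I) :
    ∃ 𝒜 : Set (Set (Set lam.ord.ToType)),
      #𝒜 = lam ∧
      (∀ A ∈ 𝒜, A ⊆ {z : Set lam.ord.ToType | #z < κ} ∧ A ∉ I) ∧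
      ∀ A ∈ 𝒜, ∀ B ∈ 𝒜, A ≠ B → A ∩ B ∈ I := by
  have hμκ : #μ.out < κ := by
    rw [mk_out, hsucc]
    exact Order.lt_succ μ
  have hZ : ∀ z ∈ {z : Set lam.ord.ToType | #z < κ}, #z ≤ #μ.out := fun z hz => by
    rw [mk_out, ← Order.lt_succ_iff, ← hsucc]
    exact hz
  have hX : #lam.ord.ToType = lam := mk_ord_toType lam
  obtain ⟨ι, P, hι, hP⟩ := exists_isDisjointPositiveFamily_mk_eq hideal hfine hcomplete hμκ
    hZ (hκinf.trans (hle.trans_eq hX.symm)) (hμκ.trans_le (hle.trans_eq hX.symm))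
  have hempty : (∅ : Set lam.ord.ToType) ∈ {z : Set lam.ord.ToType | #z < κ} := by
    simpa using aleph0_pos.trans_le hκinf
  obtain ⟨𝒜, h𝒜, hpos, hdisj⟩ := hP.exists_antichain (hideal.empty_mem hempty)
  exact ⟨𝒜, h𝒜.trans (hι.trans hX), hpos, hdisj⟩

/-- If `κ = μ⁺` is an infinite successor cardinal, `λ ≥ κ`, and `I` is a normal, fine,
`κ`-complete ideal on `𝒫_κ(λ)`, then `I` is not `λ`-saturated: there is a family of
`λ` many `I`-positive subsets of `𝒫_κ(λ)` with pairwise intersections in `I`. -/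
theorem not_lambda_saturated (μ κ lam : Cardinal.{u})
    (hκinf : ℵ₀ ≤ κ) (hsucc : κ = Order.succ μ) (hle : κ ≤ lam)
    (I : Set (Set (Set lam.ord.ToType)))
    (hideal : IsSetIdeal {z : Set lam.ord.ToType | #z < κ} I)
    (hnormal : IsNormalSetIdeal {z : Set lam.ord.ToType | #z < κ} I)
    (hfine : IsFineSetIdeal {z : Set lam.ord.ToType | #z < κ} I)
    (hcomplete : IsCompleteSetIdeal κ I) :
    ∃ 𝒜 : Set (Set (Set lam.ord.ToType)),
      #𝒜 = lam ∧
      (∀ A ∈ 𝒜, A ⊆ {z : Set lam.ord.ToType | #z < κ} ∧ A ∉ I) ∧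
      ∀ A ∈ 𝒜, ∀ B ∈ 𝒜, A ≠ B → A ∩ B ∈ I :=
  not_lambda_saturated_general μ κ lam hκinf hsucc hle I hideal hfine hcomplete
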